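/- (Structural properties of the value functions.) For every k ∈ {0, 1, …, N} and every fixed s ∈ (0,∞)ᵈ, the function ψ(y) := V_k(y, s) is convex on ℝ, even (ψ(−y) = ψ(y) for all y), satisfies ψ(y) ≥ |y| for all y ∈ ℝ, and lim_{y→∞} ψ(y)/y = 1. -/

import Mathlib

open MeasureTheory ProbabilityTheory Real Filter

noncomputable section

/-- The standard normal cumulative distribution function `Φ`. -/
def stdNormalCDF (x : ℝ) : ℝ := ((gaussianReal 0 1) (Set.Iic x)).toReal

/-- The law of `d` i.i.d. standard normal random variables. -/
def stdGaussianPi (d : ℕ) : Measure (Fin d → ℝ) := Measure.pi fun _ => gaussianReal 0 1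

/-- Next-period (discounted) prices in the uncorrelated Black-Scholes market:
given current prices `s`, volatilities `σ`, time increment `Δt` and Gaussian noise `ω`,
the next price of asset `i` is `sⁱ · exp(−(σⁱ)²Δt/2 + σⁱ√Δt · ωⁱ)`. -/
def nextPrice (d : ℕ) (σ : Fin d → ℝ) (Δt : ℝ) (s ω : Fin d → ℝ) : Fin d → ℝ :=
  fun i => s i * Real.exp (-(σ i) ^ 2 * Δt / 2 + σ i * Real.sqrt Δt * ω i)

/-- The coefficient `±1` of a signed unit-vector action in `◇ = {±e_i}`:
an action is a pair `(i, b) : Fin d × Bool`, representing `e_i` if `b` and `−e_i` otherwise. -/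
def actionCoeff (b : Bool) : ℝ := if b then 1 else -1

/-- `passportValue d σ Δt N m x s` is the value function `V_{N−m}(x, s)` of the discrete-time
passport option pricing problem, defined backward in time by `V_N(x,s) = |x|` and
`V_k(x,s) = max_{q ∈ ◇} E[V_{k+1}(x + Σ_j qʲ(Sʲ − sʲ), S)]`, where `S` is the vector of
next-period prices given current prices `s` and the step from `k` to `k+1` uses the
time increment `Δt (k+1)`. Here `m` is the number of remaining steps. -/
def passportValue (d : ℕ) (σ : Fin d → ℝ) (Δt : ℕ → ℝ) (N : ℕ) : ℕ → ℝ → (Fin d → ℝ) → ℝ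
  | 0 => fun x _ => |x|
  | (m + 1) => fun x s =>
      ⨆ a : Fin d × Bool,
        ∫ ω, passportValue d σ Δt N m
            (x + actionCoeff a.2 * (nextPrice d σ (Δt (N - m)) s ω a.1 - s a.1))
            (nextPrice d σ (Δt (N - m)) s ω) ∂(stdGaussianPi d)


open scoped ENNReal NNReal

/-! ### Auxiliary lemmas -/

section Aux

lemma exp_mul_gaussianPDFReal (c x : ℝ) :
    rexp (c * x) * gaussianPDFReal 0 1 x = rexp (c ^ 2 / 2) * gaussianPDFReal c 1 x := by
  simp only [gaussianPDFReal, NNReal.coe_one, mul_one, sub_zero]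
  rw [mul_left_comm, mul_left_comm (rexp (c^2/2)), ← Real.exp_add, ← Real.exp_add]
  ring_nf

lemma gaussianReal01_eq :
    gaussianReal 0 1 = volume.withDensity (fun x => ENNReal.ofReal (gaussianPDFReal 0 1 x)) :=
  gaussianReal_of_var_ne_zero 0 one_ne_zero

lemma integrable_exp_mul_gaussianReal (c : ℝ) :
    Integrable (fun x => rexp (c * x)) (gaussianReal 0 1) := by
  rw [gaussianReal01_eq]
  have hm : Measurable (fun x => (gaussianPDFReal 0 1 x).toNNReal) :=
    (measurable_gaussianPDFReal 0 1).real_toNNReal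
  have : (fun x : ℝ => ENNReal.ofReal (gaussianPDFReal 0 1 x))
      = fun x => ((gaussianPDFReal 0 1 x).toNNReal : ℝ≥0∞) := rfl
  rw [this, integrable_withDensity_iff_integrable_smul hm]
  have heq : (fun x => (gaussianPDFReal 0 1 x).toNNReal • rexp (c * x))
      = fun x => rexp (c ^ 2 / 2) * gaussianPDFReal c 1 x := by
    funext x
    rw [NNReal.smul_def, smul_eq_mul, Real.coe_toNNReal _ (gaussianPDFReal_nonneg 0 1 x),
      mul_comm, exp_mul_gaussianPDFReal]
  rw [heq]
  exact (integrable_gaussianPDFReal c 1).const_mul _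

lemma integral_exp_mul_gaussianReal (c : ℝ) :
    ∫ x, rexp (c * x) ∂(gaussianReal 0 1) = rexp (c ^ 2 / 2) := by
  rw [gaussianReal01_eq]
  have hm : Measurable (fun x => (gaussianPDFReal 0 1 x).toNNReal) :=
    (measurable_gaussianPDFReal 0 1).real_toNNReal
  have : (fun x : ℝ => ENNReal.ofReal (gaussianPDFReal 0 1 x))
      = fun x => ((gaussianPDFReal 0 1 x).toNNReal : ℝ≥0∞) := rfl
  rw [this, integral_withDensity_eq_integral_smul hm]
  have heq : (fun x => (gaussianPDFReal 0 1 x).toNNReal • rexp (c * x))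
      = fun x => rexp (c ^ 2 / 2) * gaussianPDFReal c 1 x := by
    funext x
    rw [NNReal.smul_def, smul_eq_mul, Real.coe_toNNReal _ (gaussianPDFReal_nonneg 0 1 x),
      mul_comm, exp_mul_gaussianPDFReal]
  rw [heq, integral_const_mul, integral_gaussianPDFReal_eq_one c one_ne_zero, mul_one]

instance (d : ℕ) : IsProbabilityMeasure (stdGaussianPi d) := by
  unfold stdGaussianPi; infer_instance

lemma measurePreserving_eval_stdGaussianPi (d : ℕ) (i : Fin d) :
    MeasurePreserving (Function.eval i) (stdGaussianPi d) (gaussianReal 0 1) := by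
  refine ⟨measurable_pi_apply i, ?_⟩
  ext s hs
  rw [Measure.map_apply (measurable_pi_apply i) hs, stdGaussianPi]
  rw [Set.eval_preimage, Measure.pi_pi]
  rw [Finset.prod_eq_single i (fun j _ hj => by simp [Function.update_of_ne hj])
    (fun h => absurd (Finset.mem_univ i) h)]
  simp

lemma integrable_exp_eval (d : ℕ) (c : ℝ) (i : Fin d) :
    Integrable (fun ω : Fin d → ℝ => rexp (c * ω i)) (stdGaussianPi d) :=
  (measurePreserving_eval_stdGaussianPi d i).integrable_comp
    (Real.continuous_exp.comp (continuous_const.mul continuous_id)).aestronglyMeasurable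
    |>.mpr (_root_.integrable_exp_mul_gaussianReal c)

lemma integral_exp_eval (d : ℕ) (c : ℝ) (i : Fin d) :
    ∫ ω : Fin d → ℝ, rexp (c * ω i) ∂(stdGaussianPi d) = rexp (c ^ 2 / 2) := by
  rw [← integral_exp_mul_gaussianReal c,
    ← (measurePreserving_eval_stdGaussianPi d i).map_eq,
    integral_map (measurable_pi_apply i).aemeasurable
      (Real.continuous_exp.comp (continuous_const.mul continuous_id)).aestronglyMeasurable]

/-- `nextPrice` as a constant times a coordinate exponential. -/
lemma nextPrice_eq (d : ℕ) (σ : Fin d → ℝ) (Δt : ℝ) (s ω : Fin d → ℝ) (i : Fin d) :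
    nextPrice d σ Δt s ω i
      = (s i * rexp (-(σ i) ^ 2 * Δt / 2)) * rexp ((σ i * Real.sqrt Δt) * ω i) := by
  rw [nextPrice, Real.exp_add]; ring

lemma integrable_nextPrice (d : ℕ) (σ : Fin d → ℝ) (Δt : ℝ) (s : Fin d → ℝ) (i : Fin d) :
    Integrable (fun ω => nextPrice d σ Δt s ω i) (stdGaussianPi d) := by
  simp only [nextPrice_eq]
  exact (integrable_exp_eval d _ i).const_mul _

lemma integral_nextPrice (d : ℕ) (σ : Fin d → ℝ) {Δt : ℝ} (hΔt : 0 ≤ Δt)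
    (s : Fin d → ℝ) (i : Fin d) :
    ∫ ω, nextPrice d σ Δt s ω i ∂(stdGaussianPi d) = s i := by
  simp only [nextPrice_eq]
  rw [integral_const_mul, integral_exp_eval, mul_pow, Real.sq_sqrt hΔt,
    mul_assoc, ← Real.exp_add]
  have : -σ i ^ 2 * Δt / 2 + σ i ^ 2 * Δt / 2 = 0 := by ring
  rw [this, Real.exp_zero, mul_one]

lemma abs_nextPrice (d : ℕ) (σ : Fin d → ℝ) (Δt : ℝ) (s ω : Fin d → ℝ) (i : Fin d) :
    |nextPrice d σ Δt s ω i| = nextPrice d σ Δt (fun j => |s j|) ω i := by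
  simp only [nextPrice, abs_mul, Real.abs_exp]

lemma integral_abs_nextPrice (d : ℕ) (σ : Fin d → ℝ) {Δt : ℝ} (hΔt : 0 ≤ Δt)
    (s : Fin d → ℝ) (i : Fin d) :
    ∫ ω, |nextPrice d σ Δt s ω i| ∂(stdGaussianPi d) = |s i| := by
  simp only [abs_nextPrice]
  exact integral_nextPrice d σ hΔt (fun j => |s j|) i

end Aux

section Meas

lemma measurable_nextPrice (d : ℕ) (σ : Fin d → ℝ) (t : ℝ) :
    Measurable (fun p : (Fin d → ℝ) × (Fin d → ℝ) => nextPrice d σ t p.1 p.2) := by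
  apply measurable_pi_lambda
  intro i
  exact ((measurable_pi_apply i).comp measurable_fst).mul
    (Real.measurable_exp.comp (measurable_const.add
      (measurable_const.mul ((measurable_pi_apply i).comp measurable_snd))))

lemma measurable_passportValue (d : ℕ) (σ : Fin d → ℝ) (Δt : ℕ → ℝ) (N : ℕ) (m : ℕ) :
    Measurable (fun p : ℝ × (Fin d → ℝ) => passportValue d σ Δt N m p.1 p.2) := by
  induction m with
  | zero =>
    simp only [passportValue]
    exact measurable_abs.comp measurable_fst
  | succ m ih =>
    simp only [passportValue]
    apply Measurable.iSup
    intro a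
    have hsm : StronglyMeasurable fun q : (ℝ × (Fin d → ℝ)) × (Fin d → ℝ) =>
        passportValue d σ Δt N m
          (q.1.1 + actionCoeff a.2 * (nextPrice d σ (Δt (N - m)) q.1.2 q.2 a.1 - q.1.2 a.1))
          (nextPrice d σ (Δt (N - m)) q.1.2 q.2) := by
      apply Measurable.stronglyMeasurable
      have hnp : Measurable (fun q : (ℝ × (Fin d → ℝ)) × (Fin d → ℝ) =>
          nextPrice d σ (Δt (N - m)) q.1.2 q.2) :=
        (measurable_nextPrice d σ (Δt (N - m))).comp
          ((measurable_snd.comp measurable_fst).prodMk measurable_snd)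
      exact ih.comp
        (((measurable_fst.comp measurable_fst).add
          (measurable_const.mul (((measurable_pi_apply a.1).comp hnp).sub
            ((measurable_pi_apply a.1).comp (measurable_snd.comp measurable_fst))))).prodMk hnp)
    exact hsm.integral_prod_right'.measurable

end Meas

section Main

variable {d : ℕ} {σ : Fin d → ℝ} {Δt : ℕ → ℝ} {N : ℕ}

lemma abs_actionCoeff_mul (b : Bool) (z : ℝ) : |actionCoeff b * z| = |z| := by
  cases b <;> simp [actionCoeff]

lemma passportValue_succ (m : ℕ) (x : ℝ) (s : Fin d → ℝ) :
    passportValue d σ Δt N (m + 1) x s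
      = ⨆ a : Fin d × Bool,
          ∫ ω, passportValue d σ Δt N m
              (x + actionCoeff a.2 * (nextPrice d σ (Δt (N - m)) s ω a.1 - s a.1))
              (nextPrice d σ (Δt (N - m)) s ω) ∂(stdGaussianPi d) := rfl

lemma passportValue_main (hd : 0 < d) (hΔt : ∀ n, 0 < Δt n) (m : ℕ) :
    ∀ (s : Fin d → ℝ),
      (∀ x, passportValue d σ Δt N m (-x) s = passportValue d σ Δt N m x s)
      ∧ (∀ x, |x| ≤ passportValue d σ Δt N m x s)
      ∧ (∀ x, passportValue d σ Δt N m x s ≤ |x| + 2 * m * ∑ i, |s i|)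
      ∧ ConvexOn ℝ Set.univ (fun y => passportValue d σ Δt N m y s) := by
  have : Nonempty (Fin d) := ⟨⟨0, hd⟩⟩
  induction m with
  | zero =>
    intro s
    refine ⟨fun x => abs_neg x, fun x => le_refl _, fun x => by simp [passportValue], ?_⟩
    refine ⟨convex_univ, fun x _ y _ a b ha hb hab => ?_⟩
    simp only [passportValue, smul_eq_mul]
    exact le_trans (abs_add_le _ _) (by rw [abs_mul, abs_mul, abs_of_nonneg ha, abs_of_nonneg hb])
  | succ m ih =>
    intro s
    set t := Δt (N - m) with ht
    have ht0 : (0:ℝ) ≤ t := (hΔt _).le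
    set S : (Fin d → ℝ) → (Fin d → ℝ) := nextPrice d σ t s with hSdef
    set V : ℝ → (Fin d → ℝ) → ℝ := passportValue d σ Δt N m with hVdef
    set F : Fin d × Bool → ℝ → ℝ := fun a x =>
      ∫ ω, V (x + actionCoeff a.2 * (S ω a.1 - s a.1)) (S ω) ∂(stdGaussianPi d) with hFdef
    have hVeq : ∀ x, passportValue d σ Δt N (m + 1) x s = ⨆ a, F a x := fun x =>
      passportValue_succ m x s
    set Ssum : ℝ := ∑ i, |s i| with hSsum
    have hSsum0 : 0 ≤ Ssum := Finset.sum_nonneg fun i _ => abs_nonneg _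
    have hsle : ∀ j : Fin d, |s j| ≤ Ssum := fun j =>
      Finset.single_le_sum (fun i _ => abs_nonneg (s i)) (Finset.mem_univ j)
    have hSmeas : Measurable S :=
      (measurable_nextPrice d σ t).comp (measurable_const.prodMk measurable_id)
    -- measurability of the integrands
    have hmeas : ∀ (a : Fin d × Bool) (x : ℝ),
        AEStronglyMeasurable (fun ω => V (x + actionCoeff a.2 * (S ω a.1 - s a.1)) (S ω))
          (stdGaussianPi d) := by
      intro a x
      refine Measurable.aestronglyMeasurable ?_
      exact (measurable_passportValue d σ Δt N m).comp
        ((measurable_const.add (measurable_const.mul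
          (((measurable_pi_apply a.1).comp hSmeas).sub measurable_const))).prodMk hSmeas)
    -- dominating function
    have hGint : ∀ (a : Fin d × Bool) (x : ℝ),
        Integrable (fun ω => |x| + (|S ω a.1| + |s a.1|) + 2 * m * ∑ i, |S ω i|)
          (stdGaussianPi d) := by
      intro a x
      refine (integrable_const _ |>.add
        (((integrable_nextPrice d σ t s a.1).abs).add (integrable_const _))).add ?_
      exact (integrable_finset_sum _ fun i _ => (integrable_nextPrice d σ t s i).abs).const_mul _
    have hGval : ∀ (a : Fin d × Bool) (x : ℝ),
        ∫ ω, (|x| + (|S ω a.1| + |s a.1|) + 2 * m * ∑ i, |S ω i|) ∂(stdGaussianPi d)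
          = |x| + 2 * |s a.1| + 2 * m * Ssum := by
      intro a x
      have iA : Integrable (fun ω => |S ω a.1|) (stdGaussianPi d) :=
        (integrable_nextPrice d σ t s a.1).abs
      have iS : ∀ i : Fin d, Integrable (fun ω => |S ω i|) (stdGaussianPi d) := fun i =>
        (integrable_nextPrice d σ t s i).abs
      have iB : Integrable (fun ω => 2 * (m:ℝ) * ∑ i, |S ω i|) (stdGaussianPi d) := by
        exact (integrable_finset_sum _ fun i _ => iS i).const_mul _
      have iAc : Integrable (fun ω => |S ω a.1| + |s a.1|) (stdGaussianPi d) := by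
        exact iA.add (integrable_const _)
      have iC : Integrable (fun ω => |x| + (|S ω a.1| + |s a.1|)) (stdGaussianPi d) := by
        exact (integrable_const _).add iAc
      rw [integral_add iC iB, integral_add (integrable_const _) iAc,
        integral_add iA (integrable_const _),
        integral_const_mul, integral_finset_sum _ (fun i _ => iS i),
        integral_const, integral_const]
      simp only [probReal_univ, smul_eq_mul, one_mul]
      have h1 : ∫ ω, |S ω a.1| ∂(stdGaussianPi d) = |s a.1| := integral_abs_nextPrice d σ ht0 s a.1
      have h2 : ∀ i : Fin d, ∫ ω, |S ω i| ∂(stdGaussianPi d) = |s i| := fun i =>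
        integral_abs_nextPrice d σ ht0 s i
      rw [h1]
      simp_rw [h2]
      ring
    -- pointwise bound on the integrand
    have hptwise : ∀ (a : Fin d × Bool) (x : ℝ) (ω : Fin d → ℝ),
        V (x + actionCoeff a.2 * (S ω a.1 - s a.1)) (S ω)
          ≤ |x| + (|S ω a.1| + |s a.1|) + 2 * m * ∑ i, |S ω i| := by
      intro a x ω
      refine le_trans ((ih (S ω)).2.2.1 _) ?_
      have h1 : |x + actionCoeff a.2 * (S ω a.1 - s a.1)| ≤ |x| + (|S ω a.1| + |s a.1|) := by
        refine le_trans (abs_add_le _ _) ?_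
        rw [abs_actionCoeff_mul]
        exact add_le_add le_rfl (by have := abs_add_le (S ω a.1) (-s a.1); rwa [abs_neg, ← sub_eq_add_neg] at this)
      exact add_le_add h1 (le_refl _)
    have hVnonneg : ∀ (y : ℝ) (s' : Fin d → ℝ), 0 ≤ V y s' := fun y s' =>
      le_trans (abs_nonneg y) ((ih s').2.1 y)
    -- integrability of the integrand
    have hint : ∀ (a : Fin d × Bool) (x : ℝ),
        Integrable (fun ω => V (x + actionCoeff a.2 * (S ω a.1 - s a.1)) (S ω))
          (stdGaussianPi d) := by
      intro a x
      refine Integrable.mono (hGint a x) (hmeas a x) (ae_of_all _ fun ω => ?_)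
      rw [Real.norm_eq_abs, Real.norm_eq_abs, abs_of_nonneg (hVnonneg _ _)]
      refine le_trans (hptwise a x ω) (le_abs_self _)
    -- upper bound on F
    have hFub : ∀ (a : Fin d × Bool) (x : ℝ), F a x ≤ |x| + 2 * (m + 1 : ℝ) * Ssum := by
      intro a x
      have h1 : F a x ≤ |x| + 2 * |s a.1| + 2 * m * Ssum := by
        rw [← hGval a x]
        exact integral_mono (hint a x) (hGint a x) (hptwise a x)
      have h2 : |s a.1| ≤ Ssum := hsle a.1
      have hm0 : (0:ℝ) ≤ (m:ℝ) := Nat.cast_nonneg m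
      nlinarith
    -- lower bound on F
    have hFlb : ∀ (a : Fin d × Bool) (x : ℝ), |x| ≤ F a x := by
      intro a x
      have hlin : Integrable (fun ω => x + actionCoeff a.2 * (S ω a.1 - s a.1))
          (stdGaussianPi d) :=
        (integrable_const x).add
          (((integrable_nextPrice d σ t s a.1).sub (integrable_const _)).const_mul _)
      have hlinval : ∫ ω, (x + actionCoeff a.2 * (S ω a.1 - s a.1)) ∂(stdGaussianPi d) = x := by
        have iL1 : Integrable (fun ω => actionCoeff a.2 * (S ω a.1 - s a.1)) (stdGaussianPi d) := by
          exact ((integrable_nextPrice d σ t s a.1).sub (integrable_const _)).const_mul _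
        have iL2 : Integrable (fun ω => S ω a.1) (stdGaussianPi d) :=
          integrable_nextPrice d σ t s a.1
        rw [integral_add (integrable_const x) iL1,
          integral_const, integral_const_mul,
          integral_sub iL2 (integrable_const _), integral_const]
        simp only [probReal_univ, smul_eq_mul, one_mul]
        rw [integral_nextPrice d σ ht0 s a.1]
        ring
      calc |x| = |∫ ω, (x + actionCoeff a.2 * (S ω a.1 - s a.1)) ∂(stdGaussianPi d)| := by
            rw [hlinval]
        _ ≤ ∫ ω, |x + actionCoeff a.2 * (S ω a.1 - s a.1)| ∂(stdGaussianPi d) :=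
            by simpa [Real.norm_eq_abs] using
              norm_integral_le_integral_norm (μ := stdGaussianPi d)
                (fun ω => x + actionCoeff a.2 * (S ω a.1 - s a.1))
        _ ≤ F a x := integral_mono hlin.abs (hint a x) fun ω => (ih (S ω)).2.1 _
    have hbdd : ∀ x : ℝ, BddAbove (Set.range fun a => F a x) := fun x =>
      (Set.finite_range _).bddAbove
    -- evenness key
    have hkey : ∀ (i : Fin d) (b : Bool) (x : ℝ), F (i, b) (-x) = F (i, !b) x := by
      intro i b x
      refine integral_congr_ae (ae_of_all _ fun ω => ?_)
      show V (-x + actionCoeff b * (S ω i - s i)) (S ω)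
        = V (x + actionCoeff (!b) * (S ω i - s i)) (S ω)
      have h1 : -x + actionCoeff b * (S ω i - s i)
          = -(x + actionCoeff (!b) * (S ω i - s i)) := by
        cases b <;> simp [actionCoeff] <;> ring
      rw [h1, (ih (S ω)).1]
    refine ⟨?_, ?_, ?_, ?_⟩
    · -- evenness
      intro x
      rw [hVeq, hVeq]
      apply le_antisymm
      · refine ciSup_le fun a => ?_
        rw [show a = (a.1, a.2) from rfl, hkey a.1 a.2 x]
        exact le_ciSup (hbdd x) (a.1, !a.2)
      · refine ciSup_le fun a => ?_
        have : F (a.1, a.2) x = F (a.1, !a.2) (-x) := by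
          rw [hkey a.1 (!a.2) x, Bool.not_not]
        rw [show a = (a.1, a.2) from rfl, this]
        exact le_ciSup (hbdd (-x)) (a.1, !a.2)
    · -- lower bound
      intro x
      rw [hVeq]
      exact le_trans (hFlb (⟨0, hd⟩, true) x) (le_ciSup (hbdd x) _)
    · -- upper bound
      intro x
      rw [hVeq]
      refine ciSup_le fun a => ?_
      refine le_trans (hFub a x) ?_
      push_cast
      exact le_refl _
    · -- convexity
      refine ⟨convex_univ, fun x _ y _ p q hp hq hpq => ?_⟩
      simp only [hVeq, smul_eq_mul]
      refine ciSup_le fun a => ?_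
      have hconv : ∀ ω, V (p * x + q * y + actionCoeff a.2 * (S ω a.1 - s a.1)) (S ω)
          ≤ p * V (x + actionCoeff a.2 * (S ω a.1 - s a.1)) (S ω)
            + q * V (y + actionCoeff a.2 * (S ω a.1 - s a.1)) (S ω) := by
        intro ω
        have h1 : p * x + q * y + actionCoeff a.2 * (S ω a.1 - s a.1)
            = p * (x + actionCoeff a.2 * (S ω a.1 - s a.1))
              + q * (y + actionCoeff a.2 * (S ω a.1 - s a.1)) := by
          linear_combination (-(actionCoeff a.2 * (S ω a.1 - s a.1))) * hpq
        rw [h1]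
        have h2 := (ih (S ω)).2.2.2.2 (Set.mem_univ (x + actionCoeff a.2 * (S ω a.1 - s a.1)))
          (Set.mem_univ (y + actionCoeff a.2 * (S ω a.1 - s a.1))) hp hq hpq
        simpa [smul_eq_mul] using h2
      have h3 : F a (p * x + q * y) ≤ p * F a x + q * F a y := by
        have iP : Integrable (fun ω => p * V (x + actionCoeff a.2 * (S ω a.1 - s a.1)) (S ω))
            (stdGaussianPi d) := by exact (hint a x).const_mul p
        have iQ : Integrable (fun ω => q * V (y + actionCoeff a.2 * (S ω a.1 - s a.1)) (S ω))
            (stdGaussianPi d) := by exact (hint a y).const_mul q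
        have h4 : ∫ ω, (p * V (x + actionCoeff a.2 * (S ω a.1 - s a.1)) (S ω)
              + q * V (y + actionCoeff a.2 * (S ω a.1 - s a.1)) (S ω)) ∂(stdGaussianPi d)
            = p * F a x + q * F a y := by
          rw [integral_add iP iQ, integral_const_mul, integral_const_mul]
        have h5 := integral_mono (hint a (p * x + q * y)) (iP.add iQ) hconv
        exact le_trans h5 (le_of_eq h4)
      refine le_trans h3 ?_
      exact add_le_add (mul_le_mul_of_nonneg_left (le_ciSup (hbdd x) a) hp)
        (mul_le_mul_of_nonneg_left (le_ciSup (hbdd y) a) hq)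

end Main
/-- Structural properties of the value functions: for every `k ∈ {0,…,N}` and fixed prices `s`,
the function `ψ(y) := V_k(y, s)` is convex, even, dominates the absolute value, and satisfies
`ψ(y)/y → 1` as `y → ∞`. -/
theorem statement_7
    (d : ℕ) (hd : 0 < d) (σ : Fin d → ℝ) (hσ : ∀ i, 0 < σ i)
    (Δt : ℕ → ℝ) (hΔt : ∀ n, 0 < Δt n) (N k : ℕ) (hk : k ≤ N)
    (s : Fin d → ℝ) (hs : ∀ i, 0 < s i) :
    ConvexOn ℝ Set.univ (fun y => passportValue d σ Δt N (N - k) y s)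
    ∧ (∀ y : ℝ, passportValue d σ Δt N (N - k) (-y) s = passportValue d σ Δt N (N - k) y s)
    ∧ (∀ y : ℝ, |y| ≤ passportValue d σ Δt N (N - k) y s)
    ∧ Tendsto (fun y => passportValue d σ Δt N (N - k) y s / y) atTop (nhds 1) := by
  obtain ⟨heven, hlb, hub, hconv⟩ :
      (∀ x, passportValue d σ Δt N (N - k) (-x) s = passportValue d σ Δt N (N - k) x s)
      ∧ (∀ x, |x| ≤ passportValue d σ Δt N (N - k) x s)
      ∧ (∀ x, passportValue d σ Δt N (N - k) x s ≤ |x| + 2 * (N - k : ℕ) * ∑ i, |s i|)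
      ∧ ConvexOn ℝ Set.univ (fun y => passportValue d σ Δt N (N - k) y s) :=
    passportValue_main hd hΔt (N - k) s
  refine ⟨hconv, heven, hlb, ?_⟩
  set C : ℝ := 2 * ((N - k : ℕ) : ℝ) * ∑ i, |s i| with hC
  have hC0 : 0 ≤ C := by
    have : (0:ℝ) ≤ ∑ i, |s i| := Finset.sum_nonneg fun i _ => abs_nonneg _
    positivity
  have h2 : Tendsto (fun y : ℝ => 1 + C / y) atTop (nhds 1) := by
    have h3 : Tendsto (fun y : ℝ => C / y) atTop (nhds 0) :=
      Tendsto.div_atTop tendsto_const_nhds tendsto_id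
    simpa using (tendsto_const_nhds (x := (1:ℝ)) (f := atTop)).add h3
  refine tendsto_of_tendsto_of_tendsto_of_le_of_le' tendsto_const_nhds h2 ?_ ?_
  · filter_upwards [eventually_gt_atTop (0:ℝ)] with y hy
    rw [le_div_iff₀ hy, one_mul]
    exact le_trans (le_abs_self y) (hlb y)
  · filter_upwards [eventually_gt_atTop (0:ℝ)] with y hy
    have hub' : passportValue d σ Δt N (N - k) y s ≤ y + C := by
      have h4 := hub y
      rwa [abs_of_pos hy] at h4
    rw [div_le_iff₀ hy]
    have h5 : (1 + C / y) * y = y + C := by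
      field_simp
    rw [h5]
    exact hub'
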